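/- For h = 1 and 0 < |q| < 1, the operator values H_q^n(x) for x ∈ [0,1] are bounded in absolute value by 2^n. -/

import Mathlib

open Finset

noncomputable def qNum (q : ℝ) (n : ℕ) : ℝ := (1 - q ^ n) / (1 - q)

noncomputable def qFact (q : ℝ) : ℕ → ℝ
  | 0 => 1
  | n + 1 => qFact q n * qNum q (n + 1)

noncomputable def qExp (q z : ℝ) : ℝ := ∑' n : ℕ, z ^ n / qFact q n

noncomputable def qShift (q a : ℝ) (n : ℕ) : ℝ := ∏ j ∈ Finset.range n, (1 - q ^ j * a)

noncomputable def qBinom (q : ℝ) (n k : ℕ) : ℝ :=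
  qShift q q n / (qShift q q (n - k) * qShift q q k)

/-! By the `q`-binomial theorem, homogenised at `a = 1 + x`, `b = -x`, the sum is the product
`∏ j < n, (1 + (1 - q ^ j) x)`. Its factors are nonnegative, and their sum is at most
`n (1 + x) ≤ 2n` because `∑ j < n, q ^ j ≥ 0` for `q > -1`; AM-GM then bounds the product
by `2 ^ n`. -/

theorem Real.prod_le_pow_card_of_sum_le {ι : Type*} {s : Finset ι} {f : ι → ℝ} {c : ℝ}
    (hf : ∀ i ∈ s, 0 ≤ f i) (hsum : ∑ i ∈ s, f i ≤ #s * c) : ∏ i ∈ s, f i ≤ c ^ #s := by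
  rcases s.eq_empty_or_nonempty with rfl | hs
  · simp
  have hcard : (0 : ℝ) < #s := by exact_mod_cast hs.card_pos
  have hmean : (∏ i ∈ s, f i) ^ (#s : ℝ)⁻¹ ≤ c := by
    have := Real.geom_mean_le_arith_mean s (fun _ ↦ 1) f (fun _ _ ↦ zero_le_one)
      (by simpa using hcard) hf
    simp only [Real.rpow_one, one_mul, sum_const, nsmul_eq_mul, mul_one] at this
    exact this.trans ((div_le_iff₀' hcard).mpr hsum)
  calc ∏ i ∈ s, f i = ((∏ i ∈ s, f i) ^ (#s : ℝ)⁻¹) ^ #s :=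
        (Real.rpow_inv_natCast_pow (prod_nonneg hf) hs.card_pos.ne').symm
    _ ≤ c ^ #s := pow_le_pow_left₀ (Real.rpow_nonneg (prod_nonneg hf) _) hmean _

theorem geom_sum_nonneg_of_neg_one_lt {q : ℝ} (hq : -1 < q) (n : ℕ) :
    0 ≤ ∑ j ∈ range n, q ^ j := by
  rcases Nat.eq_zero_or_pos n with rfl | hn
  · simp
  · exact (geom_sum_pos' (by linarith) hn.ne').le

theorem pow_le_one_of_abs_le_one {q : ℝ} (hq : |q| ≤ 1) (n : ℕ) : q ^ n ≤ 1 :=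
  (le_abs_self _).trans ((abs_pow q n).trans_le (pow_le_one₀ (abs_nonneg q) hq))

theorem qShift_succ (q a : ℝ) (n : ℕ) : qShift q a (n + 1) = qShift q a n * (1 - q ^ n * a) :=
  prod_range_succ _ _

theorem qShift_zero (q a : ℝ) : qShift q a 0 = 1 := prod_range_zero _

section QBinomial

variable {q : ℝ}

theorem one_sub_pow_mul_self_pos (hq : |q| < 1) (n : ℕ) : 0 < 1 - q ^ n * q := by
  have : |q ^ n * q| < 1 := by
    rw [← pow_succ, abs_pow]
    exact pow_lt_one₀ (abs_nonneg q) hq n.succ_ne_zero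
  linarith [le_abs_self (q ^ n * q)]

theorem qShift_self_pos (hq : |q| < 1) (n : ℕ) : 0 < qShift q q n :=
  prod_pos fun j _ ↦ one_sub_pow_mul_self_pos hq j

theorem qBinom_zero_right (hq : |q| < 1) (n : ℕ) : qBinom q n 0 = 1 := by
  rw [qBinom, Nat.sub_zero, qShift_zero, mul_one, div_self (qShift_self_pos hq n).ne']

theorem qBinom_self (hq : |q| < 1) (n : ℕ) : qBinom q n n = 1 := by
  rw [qBinom, Nat.sub_self, qShift_zero, one_mul, div_self (qShift_self_pos hq n).ne']

theorem qBinom_succ_succ (hq : |q| < 1) {n k : ℕ} (hk : k < n) :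
    qBinom q (n + 1) (k + 1) = qBinom q n (k + 1) + q ^ (n - k) * qBinom q n k := by
  obtain ⟨m, rfl⟩ : ∃ m, n = k + 1 + m := ⟨n - (k + 1), by omega⟩
  have hnk : k + 1 + m - k = m + 1 := by omega
  simp only [qBinom, hnk, show k + 1 + m + 1 - (k + 1) = m + 1 by omega,
    show k + 1 + m - (k + 1) = m by omega, qShift_succ q q (k + 1 + m), qShift_succ q q m,
    qShift_succ q q k]
  have := qShift_self_pos hq m
  have := qShift_self_pos hq k
  have : 1 - q * q ^ m ≠ 0 := by rw [mul_comm]; exact (one_sub_pow_mul_self_pos hq m).ne'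
  have : 1 - q * q ^ k ≠ 0 := by rw [mul_comm]; exact (one_sub_pow_mul_self_pos hq k).ne'
  field_simp
  ring

/-- The coefficient of `t ^ k` in `∏ j < n, (1 + q ^ j * t)`, which vanishes for `k > n`. -/
noncomputable def qCauchyCoeff (q : ℝ) (n k : ℕ) : ℝ :=
  if k ≤ n then qBinom q n k * q ^ (k * (k - 1) / 2) else 0

theorem qCauchyCoeff_zero_right (hq : |q| < 1) (n : ℕ) : qCauchyCoeff q n 0 = 1 := by
  simp [qCauchyCoeff, qBinom_zero_right hq]

theorem qCauchyCoeff_succ_succ (hq : |q| < 1) (n k : ℕ) :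
    qCauchyCoeff q (n + 1) (k + 1) = qCauchyCoeff q n (k + 1) + q ^ n * qCauchyCoeff q n k := by
  rw [qCauchyCoeff, qCauchyCoeff, qCauchyCoeff, Nat.triangle_succ]
  rcases lt_trichotomy k n with hk | rfl | hk
  · rw [if_pos (by omega), if_pos (by omega), if_pos hk.le, qBinom_succ_succ hq hk, pow_add,
      show q ^ n = q ^ (n - k) * q ^ k by rw [← pow_add, Nat.sub_add_cancel hk.le]]
    ring
  · rw [if_pos le_rfl, if_neg (by omega), if_pos le_rfl, qBinom_self hq, qBinom_self hq, pow_add]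
    ring
  · rw [if_neg (by omega), if_neg (by omega), if_neg (by omega)]
    ring

/-- The `q`-binomial theorem in Cauchy's form. -/
theorem sum_qCauchyCoeff_mul_pow (hq : |q| < 1) (n : ℕ) (t : ℝ) :
    ∑ k ∈ range (n + 1), qCauchyCoeff q n k * t ^ k = ∏ j ∈ range n, (1 + q ^ j * t) := by
  induction n with
  | zero => simp [qCauchyCoeff_zero_right hq]
  | succ n ih =>
    have hshift : ∑ k ∈ range (n + 1), qCauchyCoeff q n (k + 1) * t ^ (k + 1)
        = ∑ k ∈ range (n + 1), qCauchyCoeff q n k * t ^ k - 1 := by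
      rw [sum_range_succ, sum_range_succ' _ n, qCauchyCoeff_zero_right hq]
      simp [qCauchyCoeff]
    rw [sum_range_succ', prod_range_succ, ← ih, qCauchyCoeff_zero_right hq]
    simp only [qCauchyCoeff_succ_succ hq, add_mul, sum_add_distrib, hshift]
    rw [mul_add, mul_one, sum_mul]
    have : ∑ k ∈ range (n + 1), q ^ n * qCauchyCoeff q n k * t ^ (k + 1)
        = ∑ k ∈ range (n + 1), qCauchyCoeff q n k * t ^ k * (q ^ n * t) :=
      sum_congr rfl fun _ _ ↦ by ring
    rw [this]
    ring

theorem sum_qBinom_mul_pow_mul_pow (hq : |q| < 1) (n : ℕ) {a : ℝ} (ha : a ≠ 0) (b : ℝ) :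
    ∑ k ∈ range (n + 1), qBinom q n k * q ^ (k * (k - 1) / 2) * a ^ (n - k) * b ^ k
      = ∏ j ∈ range n, (a + q ^ j * b) := by
  have hterm : ∀ k ∈ range (n + 1), qBinom q n k * q ^ (k * (k - 1) / 2) * a ^ (n - k) * b ^ k
      = a ^ n * (qCauchyCoeff q n k * (b / a) ^ k) := by
    intro k hk
    have hkn : k ≤ n := Nat.lt_succ_iff.mp (mem_range.mp hk)
    rw [qCauchyCoeff, if_pos hkn, div_pow, pow_sub₀ a ha hkn]
    field_simp
  rw [sum_congr rfl hterm, ← mul_sum, sum_qCauchyCoeff_mul_pow hq, ← card_range n, ← prod_const,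
    card_range, ← prod_mul_distrib]
  refine prod_congr rfl fun j _ ↦ ?_
  field_simp

end QBinomial

theorem Hq_bounded_general (q : ℝ) (hq1 : |q| < 1) (n : ℕ)
    (x : ℝ) (hx : x ∈ Set.Icc (0 : ℝ) 1) :
    |∑ k ∈ Finset.range (n + 1),
        qBinom q n k * q ^ (k * (k - 1) / 2) * (1 + x) ^ (n - k) * (-x) ^ k| ≤ 2 ^ n := by
  obtain ⟨hx0, hx1⟩ := hx
  have hfactor : ∀ j ∈ range n, 0 ≤ 1 + x + q ^ j * -x := fun j _ ↦ by
    nlinarith [pow_le_one_of_abs_le_one hq1.le j]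
  have hsum : ∑ j ∈ range n, (1 + x + q ^ j * -x) ≤ #(range n) * 2 := by
    have := geom_sum_nonneg_of_neg_one_lt (neg_lt_of_abs_lt hq1) n
    rw [sum_add_distrib, sum_const, ← sum_mul, nsmul_eq_mul]
    nlinarith
  rw [sum_qBinom_mul_pow_mul_pow hq1 n (by positivity) (-x), abs_of_nonneg (prod_nonneg hfactor)]
  simpa only [card_range] using Real.prod_le_pow_card_of_sum_le hfactor hsum

/-- For `h = 1` and `0 < |q| < 1`, `|H_q^n(x)| ≤ 2ⁿ` for `x ∈ [0,1]`. -/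
theorem Hq_bounded (q : ℝ) (hq0 : 0 < |q|) (hq1 : |q| < 1) (n : ℕ)
    (x : ℝ) (hx : x ∈ Set.Icc (0 : ℝ) 1) :
    |∑ k ∈ Finset.range (n + 1),
        qBinom q n k * q ^ (k * (k - 1) / 2) * (1 + x) ^ (n - k) * (-x) ^ k| ≤ 2 ^ n :=
  Hq_bounded_general q hq1 n x hx
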